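/- Suppose χ : [0,∞) → [0,∞) is continuous, ψ : ℝ → [0,∞) is differentiable with ψ' > 0, ξ : ℝ → (0,∞) is differentiable, and for every t > 0 the function s ↦ (1/ξ²(s))·∫_{ψ(s)}^{ψ(s+t)} χ(u) du is constant in s (the INOT condition), and moreover for some s the limit lim_{t→∞} (1/ξ²(s+t))·∫_{ψ(s)}^{ψ(s+t)} χ(u) du exists, is finite and positive (the MEPA condition), and ξ(s₀) = 1 for some s₀. Then there exist a > 0 and b > 0 with ξ²(s) = exp(b·(s−s₀)) for all s and χ(ψ(s))·ψ'(s) = a·b·exp(b·s) for all s. -/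

import Mathlib

/-!
With `F = X ∘ ψ` and `Φ = ξ²`, INOT taken against `s₀` says `F (s + t) - F s = Φ s * g t` with
`g t = F (s₀ + t) - F s₀`. Splitting an increment over `[s, s + t + t₁]` at `s + t`, at `s` and at
`s₀`, gives `Φ (s + t) = Φ s * Φ (s₀ + t)` as soon as `g t₁ ≠ 0`, which MEPA provides; so the
continuous positive function `Φ` is `exp (b * (s - s₀))`, and
`g (t + u) = g t + exp (b * t) * g u`.
Since `exp (-(b * t)) * g t → M ≠ 0`, comparing this at `t₁ + u` and at `u` forces
`exp (-(b * u)) → 0`, i.e. `b > 0`; the symmetry of the cocycle in `t, u` gives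
`g t = a * (exp (b * t) - 1)`, and differentiating `F` gives the formula for `χ (ψ s) * ψ' s`.
-/

open Real Filter Topology

theorem map_add_eq_mul_of_forall_pos_add {f : ℝ → ℝ} (hpos : ∀ x, 0 < f x)
    (hmul : ∀ x t, 0 < t → f (x + t) = f x * f t) (x y : ℝ) :
    f (x + y) = f x * f y := by
  have h₀ : f 0 = 1 := by
    have := hmul 0 1 one_pos
    rw [zero_add] at this
    nlinarith [hpos 0, hpos 1]
  rcases lt_trichotomy y 0 with hy | rfl | hy
  · have h₁ : f x = f (x + y) * f (-y) := by simpa using hmul (x + y) (-y) (by linarith)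
    have h₂ : f 0 = f y * f (-y) := by simpa using hmul y (-y) (by linarith)
    apply mul_right_cancel₀ (hpos (-y)).ne'
    linear_combination -h₁ + f x * h₂ - f x * h₀
  · rw [add_zero, h₀, mul_one]
  · exact hmul x y hy

theorem eq_exp_mul_of_continuous_of_map_add_eq_mul {f : ℝ → ℝ} (hf : Continuous f)
    (hpos : ∀ x, 0 < f x) (hmul : ∀ x t, 0 < t → f (x + t) = f x * f t) (x : ℝ) :
    f x = exp (log (f 1) * x) := by
  let L : ℝ →+ ℝ := AddMonoidHom.mk' (fun x => log (f x)) fun x y => by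
    simp only [map_add_eq_mul_of_forall_pos_add hpos hmul x y,
      log_mul (hpos x).ne' (hpos y).ne']
  have hL : L x = x * L 1 := by
    simpa using map_real_smul L (hf.log fun x => (hpos x).ne') x 1
  rw [← exp_log (hpos x)]
  simpa [L, mul_comm] using congrArg exp hL

theorem map_add_eq_mul_of_sub_eq_mul {F Φ : ℝ → ℝ} {s₀ t₁ : ℝ}
    (hF : ∀ s t, 0 < t → F (s + t) - F s = Φ s * (F (s₀ + t) - F s₀))
    (ht₁ : 0 < t₁) (hF₁ : F (s₀ + t₁) ≠ F s₀) (s t : ℝ) (ht : 0 < t) :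
    Φ (s + t) = Φ s * Φ (s₀ + t) := by
  have e₁ := hF s (t + t₁) (by positivity)
  have e₂ := hF s t ht
  have e₃ := hF (s + t) t₁ ht₁
  have e₄ := hF (s₀ + t) t₁ ht₁
  rw [add_assoc] at e₃ e₄
  have key : (Φ (s + t) - Φ s * Φ (s₀ + t)) * (F (s₀ + t₁) - F s₀) = 0 := by
    linear_combination -e₃ + e₁ - e₂ + Φ s * e₄
  exact sub_eq_zero.1 ((mul_eq_zero.1 key).resolve_right (sub_ne_zero.2 hF₁))

section ExpIncrement

variable {F : ℝ → ℝ} {b s₀ : ℝ}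

theorem increment_add_eq
    (hF : ∀ s t, 0 < t → F (s + t) - F s = exp (b * (s - s₀)) * (F (s₀ + t) - F s₀))
    (t : ℝ) {u : ℝ} (hu : 0 < u) :
    F (s₀ + (t + u)) - F s₀ = F (s₀ + t) - F s₀ + exp (b * t) * (F (s₀ + u) - F s₀) := by
  have := hF (s₀ + t) u hu
  rw [add_sub_cancel_left, add_assoc] at this
  linarith

theorem pos_of_tendsto_exp_neg_mul_increment
    (hF : ∀ s t, 0 < t → F (s + t) - F s = exp (b * (s - s₀)) * (F (s₀ + t) - F s₀))
    {M : ℝ} (hM : M ≠ 0)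
    (hlim : Tendsto (fun t => exp (-(b * t)) * (F (s₀ + t) - F s₀)) atTop (𝓝 M)) : 0 < b := by
  obtain ⟨t₁, hc⟩ := (hlim.eventually_ne hM).exists
  set c := exp (-(b * t₁)) * (F (s₀ + t₁) - F s₀)
  have hdiff : Tendsto (fun u => c * exp (-(b * u))) atTop (𝓝 0) := by
    have := (hlim.comp (tendsto_atTop_add_const_left _ t₁ tendsto_id)).sub hlim
    rw [sub_self] at this
    refine this.congr' ?_
    filter_upwards [eventually_gt_atTop 0] with u hu
    have hsplit : exp (-(b * (t₁ + u))) = exp (-(b * t₁)) * exp (-(b * u)) := by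
      rw [← exp_add]; ring_nf
    have hinv : exp (-(b * t₁)) * exp (b * t₁) = 1 := by rw [← exp_add]; simp
    simp only [Function.comp_apply, id, increment_add_eq hF t₁ hu, hsplit, c]
    linear_combination (F (s₀ + u) - F s₀) * exp (-(b * u)) * hinv
  have hexp : Tendsto (fun u => exp (-(b * u))) atTop (𝓝 0) := by
    simpa [← mul_assoc, inv_mul_cancel₀ hc] using hdiff.const_mul c⁻¹
  obtain ⟨u, hlt, hu⟩ :=
    ((hexp.eventually (gt_mem_nhds one_pos)).and (eventually_gt_atTop 0)).exists
  have := exp_lt_one_iff.1 hlt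
  nlinarith

theorem sub_eq_mul_exp_sub_one
    (hF : ∀ s t, 0 < t → F (s + t) - F s = exp (b * (s - s₀)) * (F (s₀ + t) - F s₀))
    (hb : b ≠ 0) {t₁ : ℝ} (ht₁ : 0 < t₁) (s : ℝ) :
    F s - F s₀ = (F (s₀ + t₁) - F s₀) / (exp (b * t₁) - 1) * (exp (b * (s - s₀)) - 1) := by
  set a := (F (s₀ + t₁) - F s₀) / (exp (b * t₁) - 1)
  have hne : exp (b * t₁) - 1 ≠ 0 := by
    simpa [sub_eq_zero, exp_eq_one_iff] using mul_ne_zero hb ht₁.ne'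
  have hpos : ∀ t, 0 < t → F (s₀ + t) - F s₀ = a * (exp (b * t) - 1) := by
    intro t ht
    have h₁ := increment_add_eq hF t ht₁
    have h₂ := increment_add_eq hF t₁ ht
    rw [add_comm t₁ t] at h₂
    rw [div_mul_eq_mul_div, eq_div_iff hne]
    linear_combination h₁ - h₂
  rcases lt_trichotomy s s₀ with hs | rfl | hs
  · have h := hF s (s₀ - s) (by linarith)
    have hinv : exp (b * (s - s₀)) * exp (b * (s₀ - s)) = 1 := by rw [← exp_add]; ring_nf; simp
    rw [add_sub_cancel, hpos _ (by linarith)] at h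
    linear_combination -h - a * hinv
  · simp
  · simpa using hpos (s - s₀) (by linarith)

end ExpIncrement

theorem exists_exp_of_invariant_increment_ratio {F Φ : ℝ → ℝ} (hΦ : Continuous Φ)
    (hΦpos : ∀ s, 0 < Φ s) {s₀ : ℝ} (hΦ₀ : Φ s₀ = 1)
    (hinv : ∀ t, 0 < t → ∀ s₁ s₂,
      1 / Φ s₁ * (F (s₁ + t) - F s₁) = 1 / Φ s₂ * (F (s₂ + t) - F s₂))
    (hlim : ∃ s M, 0 < M ∧
      Tendsto (fun t => 1 / Φ (s + t) * (F (s + t) - F s)) atTop (𝓝 M)) :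
    ∃ a b, 0 < a ∧ 0 < b ∧ (∀ s, Φ s = exp (b * (s - s₀))) ∧
      ∀ s, F s - F s₀ = a * (exp (b * (s - s₀)) - 1) := by
  have hF : ∀ s t, 0 < t → F (s + t) - F s = Φ s * (F (s₀ + t) - F s₀) := by
    intro s t ht
    have h := hinv t ht s s₀
    rwa [hΦ₀, div_one, one_mul, one_div, inv_mul_eq_iff_eq_mul₀ (hΦpos s).ne'] at h
  obtain ⟨sM, M, hM, hlimM⟩ := hlim
  obtain ⟨t₁, hpos, ht₁⟩ : ∃ t₁, 0 < 1 / Φ (sM + t₁) * (F (sM + t₁) - F sM) ∧ 0 < t₁ :=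
    ((hlimM.eventually (eventually_gt_nhds hM)).and (eventually_gt_atTop 0)).exists
  have hF₁ : F s₀ < F (s₀ + t₁) := by
    rw [hF sM t₁ ht₁] at hpos
    have hΦM := hΦpos sM
    have hΦM' := hΦpos (sM + t₁)
    exact sub_pos.1 (pos_of_mul_pos_right (pos_of_mul_pos_right hpos (by positivity)) hΦM.le)
  obtain ⟨b, hΦexp⟩ : ∃ b, ∀ s, Φ s = exp (b * (s - s₀)) := by
    have hmul := map_add_eq_mul_of_sub_eq_mul hF ht₁ hF₁.ne'
    refine ⟨log (Φ (s₀ + 1)), fun s => ?_⟩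
    simpa using eq_exp_mul_of_continuous_of_map_add_eq_mul (f := fun x => Φ (s₀ + x))
      (by fun_prop) (fun x => hΦpos _)
      (fun x t ht => by simpa [add_assoc] using hmul (s₀ + x) t ht) (s - s₀)
  simp only [hΦexp] at hF hlimM
  have hb : 0 < b := by
    refine pos_of_tendsto_exp_neg_mul_increment hF hM.ne' (hlimM.congr' ?_)
    filter_upwards [eventually_gt_atTop 0] with t ht
    rw [hF sM t ht, one_div, ← exp_neg, ← mul_assoc, ← exp_add]
    ring_nf
  refine ⟨_, b, div_pos (sub_pos.2 hF₁) (sub_pos.2 (one_lt_exp_iff.2 (by positivity))), hb,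
    hΦexp, sub_eq_mul_exp_sub_one hF hb.ne' ht₁⟩

theorem stmt_10_general (χ ψ ξ : ℝ → ℝ)
    (hχc : Continuous χ) (hψ : Differentiable ℝ ψ)
    (hξ : Differentiable ℝ ξ) (hξpos : ∀ s, 0 < ξ s)
    (s₀ : ℝ) (hnorm : ξ s₀ = 1)
    (hINOT : ∀ t : ℝ, 0 < t → ∀ s₁ s₂ : ℝ,
      (1 / (ξ s₁) ^ 2) * ∫ u in (ψ s₁)..(ψ (s₁ + t)), χ u
        = (1 / (ξ s₂) ^ 2) * ∫ u in (ψ s₂)..(ψ (s₂ + t)), χ u)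
    (hMEPA : ∃ s M : ℝ, 0 < M ∧
      Filter.Tendsto (fun t : ℝ => (1 / (ξ (s + t)) ^ 2) * ∫ u in (ψ s)..(ψ (s + t)), χ u)
        Filter.atTop (nhds M)) :
    ∃ a b : ℝ, 0 < a ∧ 0 < b ∧
      (∀ s : ℝ, (ξ s) ^ 2 = Real.exp (b * (s - s₀))) ∧
      (∀ s : ℝ, χ (ψ s) * deriv ψ s = a * b * Real.exp (b * s)) := by
  set F : ℝ → ℝ := fun s => ∫ u in 0..ψ s, χ u
  have hint : ∀ s t, ∫ u in ψ s..ψ (s + t), χ u = F (s + t) - F s := fun s t =>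
    (intervalIntegral.integral_interval_sub_left (hχc.intervalIntegrable _ _)
      (hχc.intervalIntegrable _ _)).symm
  simp only [hint] at hINOT hMEPA
  obtain ⟨a, b, ha, hb, hΦ, hF⟩ := exists_exp_of_invariant_increment_ratio
    (Φ := fun s => ξ s ^ 2) (s₀ := s₀) (hξ.continuous.pow 2) (fun s => pow_pos (hξpos s) 2)
    (by simp [hnorm]) hINOT hMEPA
  refine ⟨a * exp (-(b * s₀)), b, by positivity, hb, hΦ, fun s => ?_⟩
  have hF' : F = fun s => F s₀ + a * (exp (b * (s - s₀)) - 1) :=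
    funext fun s => by linarith [hF s]
  have h₁ : HasDerivAt F (χ (ψ s) * deriv ψ s) s :=
    (hχc.integral_hasStrictDerivAt 0 (ψ s)).hasDerivAt.comp s (hψ s).hasDerivAt
  have h₂ : HasDerivAt F (a * (exp (b * (s - s₀)) * (b * 1))) s := by
    rw [hF']
    exact (((((hasDerivAt_id s).sub_const s₀).const_mul b).exp.sub_const 1).const_mul a).const_add _
  rw [h₁.unique h₂, show b * (s - s₀) = -(b * s₀) + b * s by ring, exp_add]
  ring

theorem stmt_10 (χ ψ ξ : ℝ → ℝ)
    (hχc : Continuous χ) (hχnn : ∀ u, 0 ≤ u → 0 ≤ χ u)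
    (hψnn : ∀ s, 0 ≤ ψ s) (hψ : Differentiable ℝ ψ) (hψ' : ∀ s, 0 < deriv ψ s)
    (hξ : Differentiable ℝ ξ) (hξpos : ∀ s, 0 < ξ s)
    (s₀ : ℝ) (hnorm : ξ s₀ = 1)
    (hINOT : ∀ t : ℝ, 0 < t → ∀ s₁ s₂ : ℝ,
      (1 / (ξ s₁) ^ 2) * ∫ u in (ψ s₁)..(ψ (s₁ + t)), χ u
        = (1 / (ξ s₂) ^ 2) * ∫ u in (ψ s₂)..(ψ (s₂ + t)), χ u)
    (hMEPA : ∃ s M : ℝ, 0 < M ∧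
      Filter.Tendsto (fun t : ℝ => (1 / (ξ (s + t)) ^ 2) * ∫ u in (ψ s)..(ψ (s + t)), χ u)
        Filter.atTop (nhds M)) :
    ∃ a b : ℝ, 0 < a ∧ 0 < b ∧
      (∀ s : ℝ, (ξ s) ^ 2 = Real.exp (b * (s - s₀))) ∧
      (∀ s : ℝ, χ (ψ s) * deriv ψ s = a * b * Real.exp (b * s)) :=
  stmt_10_general χ ψ ξ hχc hψ hξ hξpos s₀ hnorm hINOT hMEPA
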